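/- Let a, b be integers with 0 < b < a and let β be the unique real root greater than 1 of the polynomial P(X) = X^3 − aX^2 − bX + 1. Then L_⊕(β) ≥ 1; more precisely, there exist x, y ∈ ℤ_β with x + y ∈ fin(β) but x + y ∉ ℤ_β. -/

import Mathlib

open Polynomial

/-- The β-transformation `T_β(x) = βx - ⌊βx⌋`. -/
noncomputable def betaT (β : ℝ) : ℝ → ℝ := fun x => β * x - ⌊β * x⌋

/-- `fin(β)`: reals `x` such that `|x|/β^N ∈ [0,1)` and the greedy expansion of
`|x|/β^N` is finite, for some `N, n ∈ ℕ`. -/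
def finBeta (β : ℝ) : Set ℝ :=
  {x | ∃ N n : ℕ, |x| / β ^ N ∈ Set.Ico (0 : ℝ) 1 ∧ (betaT β)^[n] (|x| / β ^ N) = 0}

/-- `ℤ_β`: the set of β-integers. -/
def betaInt (β : ℝ) : Set ℝ :=
  {x | ∃ N : ℕ, |x| / β ^ N ∈ Set.Ico (0 : ℝ) 1 ∧ (betaT β)^[N] (|x| / β ^ N) = 0}

/-- `L_⊕(β)`: the least `L ∈ ℕ` such that `β^L·(x+y) ∈ ℤ_β` for all
`x, y ∈ ℤ_β` with `x + y ∈ fin(β)`. -/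
noncomputable def Lplus (β : ℝ) : ℕ :=
  sInf {L : ℕ | ∀ x ∈ betaInt β, ∀ y ∈ betaInt β,
    x + y ∈ finBeta β → β ^ L * (x + y) ∈ betaInt β}

/-- `L_⊗(β)`: the least `L ∈ ℕ` such that `β^L·(x·y) ∈ ℤ_β` for all
`x, y ∈ ℤ_β` with `x·y ∈ fin(β)`. -/
noncomputable def Lmul (β : ℝ) : ℕ :=
  sInf {L : ℕ | ∀ x ∈ betaInt β, ∀ y ∈ betaInt β,
    x * y ∈ finBeta β → β ^ L * (x * y) ∈ betaInt β}

/-!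
The witnesses are `x = aβ` and `y = b`: dividing `P(β) = 0` by `β` gives `aβ + b = β² + β⁻¹`,
whose greedy expansion has the fractional digit `β⁻¹`, so it lies in `fin(β)` but not in `ℤ_β`.

The bound `1 ≤ L_⊕(β)` also needs the set defining `L_⊕(β)` to be nonempty. A β-integer is the
value at `β` of an integer polynomial with digits in `[0, ⌊β⌋]`, so at every `r` with `|r| < 1`
that polynomial is bounded by `⌊β⌋ / (1 - |r|)`. Along the `T_β`-orbit of `|x + y| / β^N` the
points therefore stay in `ℤ[β]` with bounded conjugates at the other two roots `γ ∈ (0,1)` and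
`δ ∈ (-1,0)` of `P`. Since `β, γ, δ` are distinct, a Vandermonde argument shows there are only
finitely many such points, say `Q`, and an orbit inside a set of `Q` points that reaches the fixed
point `0` reaches it within `Q` steps. Hence `β^Q (x + y) ∈ ℤ_β`.
-/

theorem Function.iterate_card_eq_of_isFixedPt {α : Type*} {f : α → α} {s : Finset α}
    {x y : α} (hs : ∀ n, f^[n] x ∈ s) (hy : Function.IsFixedPt f y) {m : ℕ} (hm : f^[m] x = y) :
    f^[s.card] x = y := by
  induction m using Nat.strong_induction_on with
  | _ m ih =>
  by_cases hms : m ≤ s.card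
  · rw [← Nat.sub_add_cancel hms, Function.iterate_add_apply, hm, hy.iterate]
  have shorten : ∀ i j, i < j → j ≤ s.card → f^[i] x = f^[j] x → f^[s.card] x = y := by
    intro i j hij hj hfij
    refine ih (m - j + i) (by omega) ?_
    rw [Function.iterate_add_apply, hfij, ← Function.iterate_add_apply,
      Nat.sub_add_cancel (by omega), hm]
  obtain ⟨i, hi, j, hj, hne, hfij⟩ := Finset.exists_ne_map_eq_of_card_lt_of_maps_to
    (s := Finset.range (s.card + 1)) (by simp) fun k _ => hs k
  rw [Finset.mem_range] at hi hj
  rcases Nat.lt_or_gt_of_ne hne with h | h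
  · exact shorten i j h (by omega) hfij
  · exact shorten j i h (by omega) hfij.symm

theorem finite_range_aeval_inter_closedBall {n : ℕ} {P : ℤ[X]} (hP : P.Monic)
    (hdeg : P.natDegree = n) {r : Fin n → ℝ} (hr : Function.Injective r)
    (hroot : ∀ i, aeval (r i) P = 0) (B : ℝ) :
    (Set.range (fun (p : ℤ[X]) (i : Fin n) => aeval (r i) p) ∩ Metric.closedBall 0 B).Finite := by
  rcases n.eq_zero_or_pos with rfl | hn
  · exact Set.toFinite _
  have hP1 : P ≠ 1 := by rintro rfl; simp at hdeg; omega
  set V := (Matrix.vandermonde r).mulVecLin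
  obtain ⟨K, -, hK⟩ := V.exists_antilipschitzWith <| LinearMap.ker_eq_bot'.2 fun c hc =>
    Matrix.eq_zero_of_mulVec_eq_zero (Matrix.det_vandermonde_ne_zero_iff.2 hr) hc
  refine ((isCompact_closedBall (0 : Fin n → ℤ) (K * B)).finite_of_discrete.image
    fun c => V fun i => (c i : ℝ)).subset ?_
  rintro _ ⟨⟨p, rfl⟩, hpB⟩
  set c : Fin n → ℤ := fun i => (p %ₘ P).coeff i
  have hc : (V fun i => (c i : ℝ)) = fun j => aeval (r j) p := by
    ext j
    rw [← aeval_modByMonic_eq_self_of_root (hroot j),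
      aeval_eq_sum_range' ((natDegree_modByMonic_lt p hP hP1).trans_eq hdeg),
      ← Fin.sum_univ_eq_sum_range]
    simp [V, c, Matrix.mulVec, dotProduct, Matrix.vandermonde_apply, mul_comm]
  refine ⟨c, ?_, hc⟩
  have hVc : ‖V fun i => (c i : ℝ)‖ ≤ B := hc ▸ mem_closedBall_zero_iff.1 hpB
  have hB : 0 ≤ B := (norm_nonneg _).trans hVc
  have hcB := (hK.le_mul_norm (map_zero V) _).trans (mul_le_mul_of_nonneg_left hVc K.2)
  rw [mem_closedBall_zero_iff, pi_norm_le_iff_of_nonneg (by positivity)]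
  intro i
  rw [← Int.norm_cast_real]
  exact (pi_norm_le_iff_of_nonneg (by positivity)).1 hcB i

section BetaTransformation

variable {β : ℝ}

theorem betaT_mem_Ico (β x : ℝ) : betaT β x ∈ Set.Ico (0 : ℝ) 1 :=
  ⟨Int.fract_nonneg _, Int.fract_lt_one _⟩

theorem betaT_iterate_mem_Ico {w : ℝ} (hw : w ∈ Set.Ico (0 : ℝ) 1) :
    ∀ n, (betaT β)^[n] w ∈ Set.Ico (0 : ℝ) 1
  | 0 => hw
  | n + 1 => by rw [Function.iterate_succ_apply']; exact betaT_mem_Ico β _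

theorem betaT_zero (β : ℝ) : betaT β 0 = 0 := by simp [betaT]

theorem betaT_iterate_zero (β : ℝ) (n : ℕ) : (betaT β)^[n] 0 = 0 :=
  Function.iterate_fixed (betaT_zero β) n

theorem betaT_of_mul_mem_Ico {x : ℝ} (hx : β * x ∈ Set.Ico (0 : ℝ) 1) : betaT β x = β * x :=
  Int.fract_eq_self.2 hx

theorem betaT_iterate_div_pow_add (hβ : 1 < β) {z : ℝ} (hz0 : 0 ≤ z) {M : ℕ}
    (hzM : z < β ^ M) (k : ℕ) : (betaT β)^[k] (z / β ^ (M + k)) = z / β ^ M := by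
  have hβ0 : 0 < β := zero_lt_one.trans hβ
  induction k with
  | zero => rfl
  | succ k ih =>
    have hmul : β * (z / β ^ (M + (k + 1))) = z / β ^ (M + k) := by
      rw [← add_assoc, pow_succ]; field_simp
    have hmem : β * (z / β ^ (M + (k + 1))) ∈ Set.Ico (0 : ℝ) 1 := by
      rw [hmul, Set.mem_Ico, div_lt_one (by positivity)]
      exact ⟨by positivity, hzM.trans_le (pow_le_pow_right₀ hβ.le (by omega))⟩
    rw [Function.iterate_succ_apply, betaT_of_mul_mem_Ico hmem, hmul, ih]

theorem intCast_mul_pow_mem_betaInt (hβ : 1 < β) {d : ℤ} (hd0 : 0 ≤ d) (hdβ : (d : ℝ) < β)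
    (k : ℕ) : (d : ℝ) * β ^ k ∈ betaInt β := by
  have hβ0 : 0 < β := zero_lt_one.trans hβ
  have hw : |(d : ℝ) * β ^ k| / β ^ (k + 1) = d / β := by
    rw [abs_of_nonneg (by positivity), pow_succ]; field_simp
  refine ⟨k + 1, ?_, ?_⟩
  · rw [hw, Set.mem_Ico, div_lt_one hβ0]
    exact ⟨by positivity, hdβ⟩
  · rw [hw, Function.iterate_succ_apply, betaT, mul_div_cancel₀ _ hβ0.ne', Int.floor_intCast,
      sub_self, betaT_iterate_zero]

end BetaTransformation

section Digits

variable {β : ℝ}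

/-- Horner form of `∑_{k<n} ⌊β T_β^k w⌋ X^(n-1-k)`, the first `n` greedy β-digits of `w`. -/
noncomputable def digitPoly (β w : ℝ) : ℕ → ℤ[X]
  | 0 => 0
  | n + 1 => X * digitPoly β w n + C ⌊β * (betaT β)^[n] w⌋

theorem aeval_digitPoly_add_betaT_iterate (β w : ℝ) (n : ℕ) :
    aeval β (digitPoly β w n) + (betaT β)^[n] w = β ^ n * w := by
  induction n with
  | zero => simp [digitPoly]
  | succ n ih =>
    rw [Function.iterate_succ_apply', pow_succ', mul_assoc, ← ih]
    simp only [digitPoly, betaT, map_add, map_mul, aeval_X, eq_intCast,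
      map_intCast]
    ring

theorem abs_aeval_digitPoly_le (hβ : 0 ≤ β) {w : ℝ} (hw : w ∈ Set.Ico (0 : ℝ) 1) {r : ℝ}
    (hr : |r| < 1) (n : ℕ) : |aeval r (digitPoly β w n)| ≤ ⌊β⌋ / (1 - |r|) := by
  have hr' : 0 < 1 - |r| := by linarith
  induction n with
  | zero =>
    simp only [digitPoly, map_zero, abs_zero]
    exact div_nonneg (by exact_mod_cast Int.floor_nonneg.2 hβ) hr'.le
  | succ n ih =>
    obtain ⟨hv0, hv1⟩ := betaT_iterate_mem_Ico hw n
    have hd0 : 0 ≤ ⌊β * (betaT β)^[n] w⌋ := Int.floor_nonneg.2 (mul_nonneg hβ hv0)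
    have hdβ : ⌊β * (betaT β)^[n] w⌋ ≤ ⌊β⌋ :=
      Int.floor_le_floor (mul_le_of_le_one_right hβ hv1.le)
    simp only [digitPoly, map_add, map_mul, aeval_X, eq_intCast, map_intCast]
    calc |r * aeval r (digitPoly β w n) + ⌊β * (betaT β)^[n] w⌋|
        ≤ |r| * (⌊β⌋ / (1 - |r|)) + ⌊β⌋ := by
          refine (abs_add_le _ _).trans (add_le_add ?_ ?_)
          · rw [abs_mul]; exact mul_le_mul_of_nonneg_left ih (abs_nonneg r)
          · rw [abs_of_nonneg (by exact_mod_cast hd0)]; exact_mod_cast hdβ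
      _ = ⌊β⌋ / (1 - |r|) := by field_simp; ring

end Digits

section Representation

variable {β : ℝ}

theorem exists_poly_aeval_eq_of_abs_eq {u : ℝ} {p : ℤ[X]} (h : |u| = |aeval β p|) :
    ∃ q : ℤ[X], aeval β q = u ∧ ∀ r : ℝ, |aeval r q| = |aeval r p| := by
  rcases abs_eq_abs.1 h with h | h
  · exact ⟨p, h.symm, fun _ => rfl⟩
  · exact ⟨-p, by rw [map_neg, h], fun r => by rw [map_neg, abs_neg]⟩

theorem exists_poly_of_mem_betaInt (hβ : 0 < β) {z : ℝ} (hz : z ∈ betaInt β) :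
    ∃ p : ℤ[X], aeval β p = z ∧ ∀ r : ℝ, |r| < 1 → |aeval r p| ≤ ⌊β⌋ / (1 - |r|) := by
  obtain ⟨N, hw, hN⟩ := hz
  have hp := aeval_digitPoly_add_betaT_iterate β (|z| / β ^ N) N
  rw [hN, add_zero, mul_div_cancel₀ _ (by positivity)] at hp
  obtain ⟨q, hq, hqp⟩ := exists_poly_aeval_eq_of_abs_eq (β := β) (u := z)
    (p := digitPoly β (|z| / β ^ N) N) (by rw [hp, abs_abs])
  exact ⟨q, hq, fun r hr => hqp r ▸ abs_aeval_digitPoly_le hβ.le hw hr N⟩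

theorem exists_poly_betaT_iterate_add (hβ : 0 ≤ β) {w : ℝ} (hw : w ∈ Set.Ico (0 : ℝ) 1)
    {N : ℕ} {p : ℤ[X]} (hp : aeval β p = β ^ N * w) (j : ℕ) :
    ∃ q : ℤ[X], aeval β q = (betaT β)^[j + N] w ∧
      ∀ r : ℝ, |r| < 1 → |aeval r q| ≤ |aeval r p| + ⌊β⌋ / (1 - |r|) := by
  refine ⟨X ^ j * p - digitPoly β w (j + N), ?_, fun r hr => ?_⟩
  · have := aeval_digitPoly_add_betaT_iterate β w (j + N)
    simp only [map_sub, map_mul, map_pow, aeval_X, hp]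
    linear_combination -this
  · simp only [map_sub, map_mul, map_pow, aeval_X]
    refine (abs_sub _ _).trans (add_le_add ?_ (abs_aeval_digitPoly_le hβ hw hr _))
    rw [abs_mul, abs_pow]
    exact mul_le_of_le_one_left (abs_nonneg _) (pow_le_one₀ (abs_nonneg r) hr.le)

theorem exists_poly_betaT_iterate_of_add (hβ : 0 < β) {x y : ℝ} (hx : x ∈ betaInt β)
    (hy : y ∈ betaInt β) {N : ℕ} (hw : |x + y| / β ^ N ∈ Set.Ico (0 : ℝ) 1) (j : ℕ) :
    ∃ q : ℤ[X], aeval β q = (betaT β)^[j + N] (|x + y| / β ^ N) ∧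
      ∀ r : ℝ, |r| < 1 → |aeval r q| ≤ 3 * (⌊β⌋ / (1 - |r|)) := by
  obtain ⟨px, rfl, hpx⟩ := exists_poly_of_mem_betaInt hβ hx
  obtain ⟨py, rfl, hpy⟩ := exists_poly_of_mem_betaInt hβ hy
  obtain ⟨p, hp, hpb⟩ := exists_poly_aeval_eq_of_abs_eq (β := β)
    (u := β ^ N * (|aeval β px + aeval β py| / β ^ N)) (p := px + py)
    (by rw [map_add, mul_div_cancel₀ _ (by positivity), abs_abs])
  obtain ⟨q, hq, hqb⟩ := exists_poly_betaT_iterate_add hβ.le hw hp j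
  refine ⟨q, hq, fun r hr => (hqb r hr).trans ?_⟩
  have hsum := (abs_add_le _ _).trans (add_le_add (hpx r hr) (hpy r hr))
  rw [← map_add, ← hpb] at hsum
  linarith

end Representation

theorem exists_pow_mul_add_mem_betaInt {n : ℕ} {P : ℤ[X]} (hP : P.Monic)
    (hdeg : P.natDegree = n) {r : Fin n → ℝ} (hr : Function.Injective r)
    (hroot : ∀ i, aeval (r i) P = 0) {β : ℝ} (hβ : 1 < β) {i₀ : Fin n} (hi₀ : r i₀ = β)
    (hconj : ∀ i ≠ i₀, |r i| < 1) :
    ∃ L : ℕ, ∀ x ∈ betaInt β, ∀ y ∈ betaInt β, x + y ∈ finBeta β →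
      β ^ L * (x + y) ∈ betaInt β := by
  have hβ0 : 0 < β := zero_lt_one.trans hβ
  obtain ⟨B, hB⟩ := Finite.bddAbove_range fun i => 3 * (⌊β⌋ / (1 - |r i|))
  set S := (fun v : Fin n → ℝ => v i₀) ''
    (Set.range (fun (p : ℤ[X]) i => aeval (r i) p) ∩ Metric.closedBall 0 (max 1 B))
  have hS : S.Finite := (finite_range_aeval_inter_closedBall hP hdeg hr hroot _).image _
  refine ⟨hS.toFinset.card, fun x hx y hy hxy => ?_⟩
  obtain ⟨N, m, hw, hwm⟩ := hxy
  have horbit : ∀ j, (betaT β)^[j] ((betaT β)^[N] (|x + y| / β ^ N)) ∈ hS.toFinset := by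
    intro j
    obtain ⟨q, hq, hqb⟩ := exists_poly_betaT_iterate_of_add hβ0 hx hy hw j
    rw [Set.Finite.mem_toFinset, ← Function.iterate_add_apply, ← hq]
    refine ⟨fun i => aeval (r i) q, ⟨⟨q, rfl⟩, ?_⟩, by simp only [hi₀]⟩
    rw [mem_closedBall_zero_iff, pi_norm_le_iff_of_nonneg (by positivity)]
    intro i
    rw [Real.norm_eq_abs]
    by_cases hi : i = i₀
    · rw [hi, hi₀, hq, abs_of_nonneg (betaT_iterate_mem_Ico hw _).1]
      exact (betaT_iterate_mem_Ico hw _).2.le.trans (le_max_left _ _)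
    · exact (hqb _ (hconj i hi)).trans ((hB ⟨i, rfl⟩).trans (le_max_right _ _))
  have hhit : (betaT β)^[m] ((betaT β)^[N] (|x + y| / β ^ N)) = 0 := by
    rw [← Function.iterate_add_apply, add_comm, Function.iterate_add_apply, hwm,
      betaT_iterate_zero]
  refine ⟨hS.toFinset.card + N, ?_, ?_⟩ <;>
    rw [abs_mul, abs_pow, abs_of_pos hβ0, pow_add, mul_div_mul_left _ _ (by positivity)]
  · exact hw
  · rw [Function.iterate_add_apply]
    exact Function.iterate_card_eq_of_isFixedPt horbit (betaT_zero β) hhit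

section Example

variable {β : ℝ}

theorem betaT_iterate_three_sq_add_inv (hβ : 1 < β) :
    (betaT β)^[3] ((β ^ 2 + β⁻¹) / β ^ 3) = β⁻¹ := by
  have hβ0 : 0 < β := zero_lt_one.trans hβ
  have hinv : 1 / β ^ (1 + 2) ∈ Set.Ico (0 : ℝ) 1 :=
    ⟨by positivity, (div_lt_one (by positivity)).2 (one_lt_pow₀ hβ (by norm_num))⟩
  have h1 : betaT β ((β ^ 2 + β⁻¹) / β ^ 3) = 1 / β ^ (1 + 2) := by
    have hmul : β * ((β ^ 2 + β⁻¹) / β ^ 3) = 1 + 1 / β ^ (1 + 2) := by field_simp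
    show Int.fract _ = _
    rw [hmul, Int.fract_one_add, Int.fract_eq_self.2 hinv]
  rw [Function.iterate_succ_apply, h1, betaT_iterate_div_pow_add hβ zero_le_one (by simpa using hβ),
    pow_one, one_div]

theorem sq_add_inv_lt_pow_three (hβ : 2 ≤ β) : β ^ 2 + β⁻¹ < β ^ 3 := by
  have hinv : β⁻¹ ≤ 2⁻¹ := inv_anti₀ (by norm_num) hβ
  nlinarith

theorem sq_add_inv_mem_finBeta (hβ : 2 ≤ β) : β ^ 2 + β⁻¹ ∈ finBeta β := by
  have hβ0 : 0 < β := by linarith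
  have hz : |β ^ 2 + β⁻¹| = β ^ 2 + β⁻¹ := abs_of_pos (by positivity)
  refine ⟨3, 4, ?_, ?_⟩ <;> rw [hz]
  · exact ⟨by positivity, (div_lt_one (by positivity)).2 (sq_add_inv_lt_pow_three hβ)⟩
  · rw [Function.iterate_succ_apply', betaT_iterate_three_sq_add_inv (by linarith)]
    show Int.fract _ = _
    rw [mul_inv_cancel₀ hβ0.ne', Int.fract_one]

theorem sq_add_inv_not_mem_betaInt (hβ : 2 ≤ β) : β ^ 2 + β⁻¹ ∉ betaInt β := by
  have hβ0 : 0 < β := by linarith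
  have hz : |β ^ 2 + β⁻¹| = β ^ 2 + β⁻¹ := abs_of_pos (by positivity)
  rintro ⟨N, ⟨-, hN⟩, hT⟩
  rw [hz, div_lt_one (by positivity)] at hN
  rw [hz] at hT
  obtain ⟨k, rfl⟩ : ∃ k, N = 3 + k := by
    refine Nat.exists_eq_add_of_le (not_lt.1 fun h => ?_)
    have : β ^ N ≤ β ^ 2 := pow_le_pow_right₀ (by linarith) (by omega)
    linarith [inv_pos.2 hβ0]
  rw [Function.iterate_add_apply, betaT_iterate_div_pow_add (by linarith) (by positivity)
    (sq_add_inv_lt_pow_three hβ), betaT_iterate_three_sq_add_inv (by linarith)] at hT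
  exact inv_ne_zero hβ0.ne' hT

end Example

theorem one_le_Lplus {β : ℝ}
    (hL : ∃ L : ℕ, ∀ x ∈ betaInt β, ∀ y ∈ betaInt β, x + y ∈ finBeta β →
      β ^ L * (x + y) ∈ betaInt β)
    {x y : ℝ} (hx : x ∈ betaInt β) (hy : y ∈ betaInt β) (hxy : x + y ∈ finBeta β)
    (hxy' : x + y ∉ betaInt β) : 1 ≤ Lplus β := by
  refine Nat.one_le_iff_ne_zero.2 fun h => ?_
  rcases Nat.sInf_eq_zero.1 h with h | h
  · exact hxy' (by simpa using h x hx y hy hxy)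
  · obtain ⟨L, hL⟩ := hL
    exact (h ▸ hL : L ∈ (∅ : Set ℕ))

section Cubic

variable {a b : ℝ}

theorem exists_cubic_root_mem_Ioo_zero_one (hab : 2 < a + b) :
    ∃ γ ∈ Set.Ioo (0 : ℝ) 1, γ ^ 3 - a * γ ^ 2 - b * γ + 1 = 0 :=
  intermediate_value_Ioo' zero_le_one
    (by fun_prop : ContinuousOn (fun x : ℝ => x ^ 3 - a * x ^ 2 - b * x + 1) _)
    ⟨by norm_num; linarith, by norm_num⟩

theorem exists_cubic_root_mem_Ioo_neg_one_zero (hba : b < a) :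
    ∃ δ ∈ Set.Ioo (-1 : ℝ) 0, δ ^ 3 - a * δ ^ 2 - b * δ + 1 = 0 :=
  intermediate_value_Ioo (by norm_num)
    (by fun_prop : ContinuousOn (fun x : ℝ => x ^ 3 - a * x ^ 2 - b * x + 1) _)
    ⟨by norm_num; linarith, by norm_num⟩

end Cubic

theorem exists_pow_mul_add_mem_betaInt_of_cubic {a b : ℤ} (hb : 0 < b) (hba : b < a) {β : ℝ}
    (hβ : 1 < β) (hroot : β ^ 3 - (a : ℝ) * β ^ 2 - (b : ℝ) * β + 1 = 0) :
    ∃ L : ℕ, ∀ x ∈ betaInt β, ∀ y ∈ betaInt β, x + y ∈ finBeta β →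
      β ^ L * (x + y) ∈ betaInt β := by
  have hab : (2 : ℝ) < a + b := by exact_mod_cast (by omega : 2 < a + b)
  obtain ⟨γ, ⟨hγ0, hγ1⟩, hγ⟩ := exists_cubic_root_mem_Ioo_zero_one hab
  obtain ⟨δ, ⟨hδ0, hδ1⟩, hδ⟩ :=
    exists_cubic_root_mem_Ioo_neg_one_zero (a := a) (b := b) (by exact_mod_cast hba)
  refine exists_pow_mul_add_mem_betaInt (P := X ^ 3 - C a * X ^ 2 - C b * X + 1) (n := 3)
    (r := ![β, γ, δ]) (i₀ := 0) (by monicity!) (by compute_degree!) ?_ ?_ hβ rfl ?_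
  · intro i j h
    fin_cases i <;> fin_cases j <;> simp at h ⊢ <;> linarith
  · intro i
    fin_cases i <;> simp [hroot, hγ, hδ]
  · intro i hi
    fin_cases i
    · exact absurd rfl hi
    · simpa [abs_lt] using ⟨by linarith, hγ1⟩
    · simpa [abs_lt] using ⟨hδ0, by linarith⟩

theorem stmt5 (a b : ℤ) (hb : 0 < b) (hba : b < a) (β : ℝ) (hβ : 1 < β)
    (hroot : β ^ 3 - (a : ℝ) * β ^ 2 - (b : ℝ) * β + 1 = 0) :
    1 ≤ Lplus β ∧
    ∃ x ∈ betaInt β, ∃ y ∈ betaInt β, x + y ∈ finBeta β ∧ x + y ∉ betaInt β := by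
  have hb1 : (1 : ℝ) ≤ b := by exact_mod_cast hb
  have hba' : (b : ℝ) + 1 ≤ a := by exact_mod_cast hba
  have haβ : (a : ℝ) < β := by nlinarith
  have hx : (a : ℝ) * β ∈ betaInt β := by
    simpa using intCast_mul_pow_mem_betaInt hβ (by omega) haβ 1
  have hy : (b : ℝ) ∈ betaInt β := by
    simpa using intCast_mul_pow_mem_betaInt hβ hb.le (by linarith) 0
  have hsum : (a : ℝ) * β + b = β ^ 2 + β⁻¹ := by
    field_simp
    linear_combination -hroot
  have hfin := hsum ▸ sq_add_inv_mem_finBeta (by linarith)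
  have hnot := hsum ▸ sq_add_inv_not_mem_betaInt (by linarith)
  exact ⟨one_le_Lplus (exists_pow_mul_add_mem_betaInt_of_cubic hb hba hβ hroot) hx hy hfin hnot,
    _, hx, _, hy, hfin, hnot⟩
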